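/- arXiv:1605.09508 — 7 statements merged into one kernel-verified Lean document; each statement's English description precedes it below -/
import Mathlib

section
/- For every real number X > 0, the number of positive integers n ≤ X with h(n) = 0 is strictly greater than X/2 − (3/2 + √2)·√X − 1 − (3√2)/2. -/
/-- The set `A_n` of pairs `(x, y)` of positive integers with `n = x(x+y)` and `1 ≤ y ≤ x-1`. -/
def lerchA (n : ℕ) : Finset (ℕ × ℕ) :=
  (Finset.range (n + 1) ×ˢ Finset.range (n + 1)).filter
    (fun p => 0 < p.1 ∧ 1 ≤ p.2 ∧ p.2 ≤ p.1 - 1 ∧ n = p.1 * (p.1 + p.2))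

/-- The set `B_n` of positive integers `x` with `n = x²`. -/
def lerchB (n : ℕ) : Finset ℕ :=
  (Finset.range (n + 1)).filter (fun x => 0 < x ∧ n = x ^ 2)

/-- The set `C_n` of positive integers `x` with `n = 2x²`. -/
def lerchC (n : ℕ) : Finset ℕ :=
  (Finset.range (n + 1)).filter (fun x => 0 < x ∧ n = 2 * x ^ 2)

/-- `h(n) = 2·|A_n| + |B_n| + |C_n|`, the `n`-th coefficient of the half Lerch sum. -/
def lerchh (n : ℕ) : ℕ := 2 * (lerchA n).card + (lerchB n).card + (lerchC n).card
/-! If `h(n) ≠ 0` then `n = x·m` with `x ≤ m ≤ 2x`, so it suffices to count such products up to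
`N = ⌊X⌋`. Split at `x = K`: for `x ≤ K` there are at most `x + 1` choices of `m`, in total
`K(K+3)/2`; for `x > K` we have `x ≤ √N` and `K < m ≤ N/(K+1)`. With `K = ⌊√X/√2⌋`,
`K(K+3)/2 + (√X - K)(√(2X) - K) ≤ X/2 + O(√X)`. -/

open Finset

lemma exists_mul_eq_of_lerchh_ne_zero {n : ℕ} (h : lerchh n ≠ 0) :
    ∃ x m : ℕ, 0 < x ∧ x ≤ m ∧ m ≤ 2 * x ∧ n = x * m := by
  have : (lerchA n).Nonempty ∨ (lerchB n).Nonempty ∨ (lerchC n).Nonempty := by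
    simp only [← Finset.card_ne_zero]
    unfold lerchh at h
    omega
  rcases this with ⟨⟨x, y⟩, hA⟩ | ⟨x, hB⟩ | ⟨x, hC⟩
  · simp only [lerchA, mem_filter] at hA
    exact ⟨x, x + y, by omega, by omega, by omega, hA.2.2.2.2⟩
  · simp only [lerchB, mem_filter] at hB
    exact ⟨x, x, hB.2.1, le_rfl, by omega, by rw [hB.2.2, sq]⟩
  · simp only [lerchC, mem_filter] at hC
    exact ⟨x, 2 * x, hC.2.1, by omega, le_rfl, by rw [hC.2.2]; ring⟩

lemma sum_Icc_one_add_one_mul_two (K : ℕ) : (∑ x ∈ Icc 1 K, (x + 1)) * 2 = K * (K + 3) := by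
  induction K with
  | zero => simp
  | succ k ih =>
    rw [sum_Icc_succ_top (by omega), add_mul, ih]
    ring

lemma card_filter_lerchh_ne_zero_le (N K : ℕ) :
    #{n ∈ Icc 1 N | lerchh n ≠ 0} * 2 ≤
      K * (K + 3) + (Nat.sqrt N - K) * (N / (K + 1) - K) * 2 := by
  set small := (Icc 1 K).biUnion fun x => {x} ×ˢ Icc x (2 * x)
  set large := Icc (K + 1) (Nat.sqrt N) ×ˢ Icc (K + 1) (N / (K + 1))
  have hsub : {n ∈ Icc 1 N | lerchh n ≠ 0} ⊆ (small ∪ large).image fun p => p.1 * p.2 := by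
    intro n hn
    obtain ⟨hnN, hn⟩ := mem_filter.1 hn
    obtain ⟨x, m, hx, hxm, hmx, rfl⟩ := exists_mul_eq_of_lerchh_ne_zero hn
    have hxmN : x * m ≤ N := (mem_Icc.1 hnN).2
    refine mem_image.2 ⟨(x, m), ?_, rfl⟩
    rcases le_or_gt x K with hxK | hKx
    · exact mem_union_left _ (mem_biUnion.2 ⟨x, mem_Icc.2 ⟨hx, hxK⟩, by simp [hxm, hmx]⟩)
    · refine mem_union_right _ (mem_product.2 ⟨mem_Icc.2 ⟨hKx, ?_⟩, mem_Icc.2 ⟨by omega, ?_⟩⟩)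
      · exact Nat.le_sqrt.2 ((Nat.mul_le_mul_left x hxm).trans hxmN)
      · rw [Nat.le_div_iff_mul_le (by omega)]
        nlinarith
  have hsmall : small.card * 2 ≤ K * (K + 3) := by
    rw [← sum_Icc_one_add_one_mul_two]
    refine Nat.mul_le_mul_right 2 (card_biUnion_le.trans (sum_le_sum fun x _ => ?_))
    simp only [card_product, card_singleton, one_mul, Nat.card_Icc]
    omega
  have hlarge : large.card = (Nat.sqrt N - K) * (N / (K + 1) - K) := by
    simp only [large, card_product, Nat.card_Icc, Nat.add_sub_add_right]
  calc #{n ∈ Icc 1 N | lerchh n ≠ 0} * 2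
      ≤ (small ∪ large).card * 2 := Nat.mul_le_mul_right 2 ((card_le_card hsub).trans card_image_le)
    _ ≤ (small.card + large.card) * 2 := Nat.mul_le_mul_right 2 (card_union_le _ _)
    _ ≤ _ := by rw [hlarge]; omega

lemma natCast_sub_le_sub {a K : ℕ} {r : ℝ} (ha : a ≤ r) (hK : K ≤ r) :
    ((a - K : ℕ) : ℝ) ≤ r - K := by
  rcases le_total K a with h | h
  · rw [Nat.cast_sub h]
    linarith
  · rw [Nat.sub_eq_zero_of_le h, Nat.cast_zero]
    linarith

/-- The count `s² - K(K+3)/2 - (s - K)(st - K)` is concave in `K`, and `K` is pinned to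
`(s/t - 1, s/t]`. -/
lemma lerch_count_arith {s t K : ℝ} (hs : 0 < s) (ht : t ^ 2 = 2) (htpos : 0 < t)
    (hKs : K * t ≤ s) (hsK : s < (K + 1) * t) :
    s ^ 2 / 2 - (3 / 2 + t) * s - 3 * t / 2 < s ^ 2 - K * (K + 3) / 2 - (s - K) * (s * t - K) := by
  have ht_le : t ≤ 1.415 := by nlinarith
  have hlo : 2 * K ≤ s * t := by nlinarith [mul_le_mul_of_nonneg_right hKs htpos.le]
  have hhi : s * t < 2 * K + 2 := by nlinarith [mul_lt_mul_of_pos_right hsK htpos]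
  nlinarith [mul_nonneg (sub_nonneg.2 hlo) (sub_nonneg.2 hhi.le),
    mul_nonneg hs.le (sub_nonneg.2 hhi.le), mul_nonneg (sq_nonneg s) (sub_nonneg.2 ht_le)]

lemma cast_sqrt_sub_mul_div_sub_le {X : ℝ} (hX : 0 < X) {K : ℕ} (hKs : K * √2 ≤ √X)
    (hsK : √X < (K + 1) * √2) :
    ((Nat.sqrt ⌊X⌋₊ - K : ℕ) : ℝ) * ((⌊X⌋₊ / (K + 1) - K : ℕ) : ℝ) ≤ (√X - K) * (√X * √2 - K) := by
  have hs : 0 < √X := Real.sqrt_pos.2 hX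
  have ht : 1 ≤ √2 := Real.one_le_sqrt.2 one_le_two
  have hKs' : (K : ℝ) ≤ √X := by nlinarith
  have hsqrt : (Nat.sqrt ⌊X⌋₊ : ℝ) ≤ √X :=
    Real.nat_sqrt_le_real_sqrt.trans (Real.sqrt_le_sqrt (Nat.floor_le hX.le))
  have hdiv : (⌊X⌋₊ / (K + 1) : ℕ) ≤ √X * √2 := by
    have : X / (K + 1) < √X * √2 := by
      rw [div_lt_iff₀ (by positivity)]
      nlinarith [Real.mul_self_sqrt hX.le]
    exact (Nat.cast_div_le.trans (by push_cast; gcongr; exact Nat.floor_le hX.le)).trans this.le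
  exact mul_le_mul (natCast_sub_le_sub hsqrt hKs') (natCast_sub_le_sub hdiv (by nlinarith))
    (Nat.cast_nonneg _) (by linarith)

/-- For every real `X > 0`, `#{1 ≤ n ≤ X : h(n) = 0} > X/2 - (3/2 + √2)√X - 1 - 3√2/2`. -/
theorem card_h_eq_zero_gt (X : ℝ) (hX : 0 < X) :
    (((Finset.Icc 1 ⌊X⌋₊).filter (fun n => lerchh n = 0)).card : ℝ)
      > X / 2 - (3 / 2 + Real.sqrt 2) * Real.sqrt X - 1 - 3 * Real.sqrt 2 / 2 := by
  set N := ⌊X⌋₊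
  set K := ⌊√X / √2⌋₊
  have ht : 0 < √2 := by positivity
  have hKs : K * √2 ≤ √X := (le_div_iff₀ ht).1 (Nat.floor_le (by positivity))
  have hsK : √X < (K + 1) * √2 := (div_lt_iff₀ ht).1 (Nat.lt_floor_add_one _)
  have hsplit : (#{n ∈ Icc 1 N | lerchh n = 0} : ℝ) + #{n ∈ Icc 1 N | lerchh n ≠ 0} = N := by
    exact_mod_cast (card_filter_add_card_filter_not _).trans (Nat.card_Icc 1 N)
  have hbad : (#{n ∈ Icc 1 N | lerchh n ≠ 0} : ℝ) * 2 ≤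
      K * (K + 3) + ((Nat.sqrt N - K : ℕ) : ℝ) * ((N / (K + 1) - K : ℕ) : ℝ) * 2 := by
    exact_mod_cast card_filter_lerchh_ne_zero_le N K
  have hlarge := cast_sqrt_sub_mul_div_sub_le hX hKs hsK
  have hN : X < N + 1 := Nat.lt_floor_add_one X
  have hkey := lerch_count_arith (Real.sqrt_pos.2 hX) (Real.sq_sqrt zero_le_two) ht hKs hsK
  rw [Real.sq_sqrt hX.le] at hkey
  linarith
end

section
/- If p is an odd prime and d is an odd positive integer, then h(p^d) = 0. -/
lemma lerchA_prime_pow_eq_empty {p : ℕ} (hp : p.Prime) (d : ℕ) : lerchA (p ^ d) = ∅ := by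
  refine Finset.filter_eq_empty_iff.mpr ?_
  rintro ⟨x, y⟩ - ⟨-, hy, hyx, heq⟩
  obtain ⟨i, -, rfl⟩ := (Nat.dvd_prime_pow hp).mp (Dvd.intro _ heq.symm)
  obtain ⟨j, -, hj⟩ := (Nat.dvd_prime_pow hp).mp (Dvd.intro_left _ heq.symm)
  have hij : i < j := (Nat.pow_lt_pow_iff_right hp.one_lt).mp (by omega)
  have h_le : p ^ (i + 1) ≤ p ^ j := Nat.pow_le_pow_right hp.pos hij
  have h_two : 2 * p ^ i ≤ p ^ (i + 1) := by
    rw [pow_succ']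
    exact Nat.mul_le_mul_right _ hp.two_le
  omega

lemma Nat.Prime.not_isSquare_pow {p d : ℕ} (hp : p.Prime) (hd : Odd d) : ¬IsSquare (p ^ d) := by
  rintro ⟨x, hx⟩
  obtain ⟨i, -, rfl⟩ := (Nat.dvd_prime_pow hp).mp (Dvd.intro _ hx.symm)
  rw [← pow_add, (Nat.pow_right_injective hp.two_le).eq_iff] at hx
  exact Nat.not_even_iff_odd.mpr hd ⟨i, hx⟩

lemma lerchB_eq_empty_of_not_isSquare {n : ℕ} (hn : ¬IsSquare n) : lerchB n = ∅ :=
  Finset.filter_eq_empty_iff.mpr fun x _ ⟨_, hx⟩ => hn ⟨x, hx.trans (sq x)⟩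

lemma lerchC_eq_empty_of_odd {n : ℕ} (hn : Odd n) : lerchC n = ∅ :=
  Finset.filter_eq_empty_iff.mpr fun _ _ ⟨_, hx⟩ =>
    Nat.not_even_iff_odd.mpr hn (even_iff_two_dvd.mpr ⟨_, hx⟩)

theorem h_odd_prime_odd_power_general (p d : ℕ) (hp : p.Prime) (hodd : Odd p)
    (hdodd : Odd d) : lerchh (p ^ d) = 0 := by
  rw [lerchh, lerchA_prime_pow_eq_empty hp,
    lerchB_eq_empty_of_not_isSquare (hp.not_isSquare_pow hdodd),
    lerchC_eq_empty_of_odd hodd.pow]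
  rfl

/-- If `p` is an odd prime and `d` is an odd positive integer, then `h(p^d) = 0`. -/
theorem h_odd_prime_odd_power (p d : ℕ) (hp : p.Prime) (hodd : Odd p)
    (hd : 0 < d) (hdodd : Odd d) : lerchh (p ^ d) = 0 :=
  h_odd_prime_odd_power_general p d hp hodd hdodd
end

section
/- Let k ≥ 2 and let p₁, p₂, …, p_k be distinct odd primes satisfying p_k > 2·p₁·p₂⋯p_{k−1}. Then h(p₁·p₂⋯p_k) = 0. -/
/-!
Write `n = P * q` with `q` prime and `2 * P < q`. A pair in `A_n` gives a divisor `x` of `n`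
with `x² < n < 2x²`, but every divisor of `n` is either a divisor of `P`, hence at most `P`
and too small, or a multiple of `q`, hence too large.
Since `q` divides `n` exactly once while it does not divide `2`, `n` is neither `x²` nor `2x²`.
-/

theorem Nat.Prime.dvd_or_dvd_of_dvd_mul {q x P : ℕ} (hq : q.Prime) (hx : x ∣ P * q) :
    x ∣ P ∨ q ∣ x := by
  by_cases hqx : q ∣ x
  · exact Or.inr hqx
  · exact Or.inl <| ((hq.coprime_iff_not_dvd.mpr hqx).symm).dvd_of_dvd_mul_right hx

theorem Nat.Prime.dvd_of_mul_sq_eq_mul {q m x P : ℕ} (hq : q.Prime) (hm : ¬ q ∣ m)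
    (h : m * x ^ 2 = P * q) : q ∣ P := by
  have hqx : q ∣ x :=
    hq.dvd_of_dvd_pow <| (hq.dvd_mul.mp ⟨P, by rw [h, mul_comm]⟩).resolve_left hm
  obtain ⟨r, rfl⟩ := hqx
  refine ⟨m * r ^ 2, Nat.eq_of_mul_eq_mul_right hq.pos ?_⟩
  rw [← h]
  ring

section
variable {P q : ℕ}

theorem lerchA_mul_prime_eq_empty (hq : q.Prime) (hP : 2 * P < q) : lerchA (P * q) = ∅ := by
  refine Finset.eq_empty_iff_forall_notMem.mpr fun ⟨x, y⟩ hxy => ?_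
  obtain ⟨-, hx, hy, hyx, hn⟩ := Finset.mem_filter.mp hxy
  have hsq_lt : x * x < P * q := by nlinarith
  have hlt_two_sq : P * q < 2 * (x * x) := by
    have : y + 1 ≤ x := by omega
    nlinarith
  rcases hq.dvd_or_dvd_of_dvd_mul ⟨x + y, hn⟩ with hxP | hqx
  · have : x ≤ P := Nat.le_of_dvd (by nlinarith) hxP
    nlinarith
  · have : q ≤ x := Nat.le_of_dvd hx hqx
    nlinarith

theorem mul_sq_ne_mul_prime {m x : ℕ} (hq : q.Prime) (hP : P < q) (hm : ¬ q ∣ m)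
    (hm0 : 0 < m) (hx : 0 < x) : m * x ^ 2 ≠ P * q := by
  intro h
  have hPpos : 0 < P := Nat.pos_of_mul_pos_right (show 0 < P * q by rw [← h]; positivity)
  have := Nat.le_of_dvd hPpos (hq.dvd_of_mul_sq_eq_mul hm h)
  omega

theorem lerchB_mul_prime_eq_empty (hq : q.Prime) (hP : 2 * P < q) : lerchB (P * q) = ∅ := by
  refine Finset.eq_empty_iff_forall_notMem.mpr fun x hx => ?_
  obtain ⟨-, hx, hn⟩ := Finset.mem_filter.mp hx
  exact mul_sq_ne_mul_prime hq (by omega) hq.not_dvd_one one_pos hx ((one_mul _).trans hn.symm)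

theorem lerchC_mul_prime_eq_empty (hq : q.Prime) (hP : 2 * P < q) : lerchC (P * q) = ∅ := by
  refine Finset.eq_empty_iff_forall_notMem.mpr fun x hx => ?_
  obtain ⟨-, hx, hn⟩ := Finset.mem_filter.mp hx
  have hPpos : 0 < P := Nat.pos_of_mul_pos_right (show 0 < P * q by rw [hn]; positivity)
  refine mul_sq_ne_mul_prime hq (by omega) ?_ two_pos hx hn.symm
  exact Nat.not_dvd_of_pos_of_lt two_pos (by omega)

theorem lerchh_mul_prime_eq_zero (hq : q.Prime) (hP : 2 * P < q) : lerchh (P * q) = 0 := by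
  simp [lerchh, lerchA_mul_prime_eq_empty hq hP, lerchB_mul_prime_eq_empty hq hP,
    lerchC_mul_prime_eq_empty hq hP]

end

theorem h_product_distinct_odd_primes_general (k : ℕ) (hk : 2 ≤ k) (p : ℕ → ℕ)
    (hprime : ∀ i < k, (p i).Prime)
    (hbig : p (k - 1) > 2 * ∏ i ∈ Finset.range (k - 1), p i) :
    lerchh (∏ i ∈ Finset.range k, p i) = 0 := by
  obtain ⟨j, rfl⟩ : ∃ j, k = j + 1 := ⟨k - 1, by omega⟩
  rw [Finset.prod_range_succ]
  exact lerchh_mul_prime_eq_zero (hprime j j.lt_succ_self) hbig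

/-- If `p 0, …, p (k-1)` (with `k ≥ 2`) are distinct odd primes with
`p (k-1) > 2 · p 0 · p 1 ⋯ p (k-2)`, then `h(p 0 · p 1 ⋯ p (k-1)) = 0`. -/
theorem h_product_distinct_odd_primes (k : ℕ) (hk : 2 ≤ k) (p : ℕ → ℕ)
    (hprime : ∀ i < k, (p i).Prime) (hodd : ∀ i < k, Odd (p i))
    (hdist : ∀ i < k, ∀ j < k, i ≠ j → p i ≠ p j)
    (hbig : p (k - 1) > 2 * ∏ i ∈ Finset.range (k - 1), p i) :
    lerchh (∏ i ∈ Finset.range k, p i) = 0 :=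
  h_product_distinct_odd_primes_general k hk p hprime hbig
end

section
/- For every real number X > 0, the number of positive integers n ≤ X with h(n) = 1 is strictly less than (1 + 1/√2)·√X. -/
open Finset

lemma exists_eq_sq_or_eq_two_mul_sq_of_lerchh_eq_one {n : ℕ} (h : lerchh n = 1) :
    ∃ x, 0 < x ∧ (n = x ^ 2 ∨ n = 2 * x ^ 2) := by
  have hBC : (lerchB n).Nonempty ∨ (lerchC n).Nonempty := by
    simp only [← card_pos]
    unfold lerchh at h
    omega
  rcases hBC with ⟨x, hx⟩ | ⟨x, hx⟩
  · simp only [lerchB, mem_filter] at hx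
    exact ⟨x, hx.2.1, Or.inl hx.2.2⟩
  · simp only [lerchC, mem_filter] at hx
    exact ⟨x, hx.2.1, Or.inr hx.2.2⟩

lemma card_le_sqrt_add_sqrt_half {s : Finset ℕ} {m : ℕ}
    (hs : ∀ n ∈ s, n ≤ m ∧ ∃ x, 0 < x ∧ (n = x ^ 2 ∨ n = 2 * x ^ 2)) :
    #s ≤ m.sqrt + (m / 2).sqrt := by
  have hsub : s ⊆ (Icc 1 m.sqrt).image (· ^ 2) ∪ (Icc 1 (m / 2).sqrt).image (2 * · ^ 2) := by
    intro n hn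
    obtain ⟨hnm, x, hx, rfl | rfl⟩ := hs n hn
    · exact mem_union_left _ (mem_image.2 ⟨x, mem_Icc.2 ⟨hx, Nat.le_sqrt'.2 hnm⟩, rfl⟩)
    · exact mem_union_right _ (mem_image.2 ⟨x, mem_Icc.2 ⟨hx, Nat.le_sqrt'.2 (by omega)⟩, rfl⟩)
  calc #s ≤ _ := card_le_card hsub
    _ ≤ _ := card_union_le _ _
    _ ≤ #(Icc 1 m.sqrt) + #(Icc 1 (m / 2).sqrt) := add_le_add card_image_le card_image_le
    _ = m.sqrt + (m / 2).sqrt := by simp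

lemma eq_zero_of_sq_eq_two_mul_sq {a b : ℕ} (h : a ^ 2 = 2 * b ^ 2) : b = 0 := by
  by_contra hb
  have hsqrt : √2 = (a / b : ℚ) := by
    refine Real.sqrt_eq_cases.2 (Or.inl ⟨?_, by positivity⟩)
    push_cast
    field_simp
    exact_mod_cast h.trans (mul_comm _ _)
  exact irrational_sqrt_two ⟨_, hsqrt.symm⟩

lemma natCast_add_natCast_lt_sqrt_add_sqrt_half {X : ℝ} (hX : 0 < X) {a b : ℕ}
    (ha : (a : ℝ) ^ 2 ≤ X) (hb : (b : ℝ) ^ 2 ≤ X / 2) : (a + b : ℝ) < √X + √(X / 2) := by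
  have hstrict : (a : ℝ) ^ 2 < X ∨ (b : ℝ) ^ 2 < X / 2 := by
    by_contra! hc
    have hab : a ^ 2 = 2 * b ^ 2 := by
      have : (a : ℝ) ^ 2 = 2 * (b : ℝ) ^ 2 := by linarith
      exact_mod_cast this
    have hb0 : (b : ℝ) = 0 := by exact_mod_cast eq_zero_of_sq_eq_two_mul_sq hab
    rw [hb0] at hc
    linarith
  rcases hstrict with ha' | hb'
  · exact add_lt_add_of_lt_of_le (Real.lt_sqrt_of_sq_lt ha') (Real.le_sqrt_of_sq_le hb)
  · exact add_lt_add_of_le_of_lt (Real.le_sqrt_of_sq_le ha) (Real.lt_sqrt_of_sq_lt hb')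

/-- For every real `X > 0`, `#{1 ≤ n ≤ X : h(n) = 1} < (1 + 1/√2)·√X`. -/
theorem card_h_eq_one_lt (X : ℝ) (hX : 0 < X) :
    (((Finset.Icc 1 ⌊X⌋₊).filter (fun n => lerchh n = 1)).card : ℝ)
      < (1 + 1 / Real.sqrt 2) * Real.sqrt X := by
  set m := ⌊X⌋₊
  have hmX : (m : ℝ) ≤ X := Nat.floor_le hX.le
  have hcard : #{n ∈ Icc 1 m | lerchh n = 1} ≤ m.sqrt + (m / 2).sqrt := by
    refine card_le_sqrt_add_sqrt_half fun n hn ↦ ?_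
    rw [mem_filter, mem_Icc] at hn
    exact ⟨hn.1.2, exists_eq_sq_or_eq_two_mul_sq_of_lerchh_eq_one hn.2⟩
  have ha : ((m.sqrt : ℕ) : ℝ) ^ 2 ≤ X := le_trans (mod_cast Nat.sqrt_le' m) hmX
  have hb : (((m / 2).sqrt : ℕ) : ℝ) ^ 2 ≤ X / 2 := by
    have : 2 * (m / 2).sqrt ^ 2 ≤ m := by have := Nat.sqrt_le' (m / 2); omega
    have : 2 * (((m / 2).sqrt : ℕ) : ℝ) ^ 2 ≤ m := mod_cast this
    linarith
  calc (#{n ∈ Icc 1 m | lerchh n = 1} : ℝ) ≤ m.sqrt + (m / 2).sqrt := mod_cast hcard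
    _ < √X + √(X / 2) := natCast_add_natCast_lt_sqrt_add_sqrt_half hX ha hb
    _ = (1 + 1 / √2) * √X := by rw [Real.sqrt_div' X zero_le_two]; ring
end

section
/- There exists a constant c > 0 such that for all sufficiently large real X, the number of positive integers n ≤ X with h(n) = 1 is at least c·√X / log X. -/
/-! For a prime `p` the only contribution to `h(p²)` is `x = p ∈ B_{p²}`: a pair in `A_{p²}`
would make `x` a divisor of `p²` smaller than `p² / x = x + y`, hence `x = 1`, leaving no room
for `y`; and `p² = 2x²` is impossible. So the count is at least `π(√X)`, and Chebyshev's lower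
bound `π(x) ≫ x / log x` gives the claim. -/

open Filter Real

lemma lerchA_sq_of_prime {p : ℕ} (hp : p.Prime) : lerchA (p ^ 2) = ∅ := by
  refine Finset.eq_empty_of_forall_notMem fun ⟨x, y⟩ hxy ↦ ?_
  simp only [lerchA, Finset.mem_filter, Finset.mem_product, Finset.mem_range] at hxy
  obtain ⟨-, -, hy, hyx, heq⟩ := hxy
  obtain ⟨i, hi, rfl⟩ := (Nat.dvd_prime_pow hp).1 ⟨x + y, heq⟩
  interval_cases i
  · simp only [pow_zero] at hyx
    omega
  · rw [pow_one, sq] at heq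
    have := Nat.eq_of_mul_eq_mul_left hp.pos heq
    omega
  · nlinarith [pow_pos hp.pos 2]

lemma lerchB_sq {n : ℕ} (hn : 0 < n) : lerchB (n ^ 2) = {n} := by
  ext x
  simp only [lerchB, Finset.mem_filter, Finset.mem_range, Finset.mem_singleton]
  constructor
  · rintro ⟨-, -, h⟩
    exact (Nat.pow_left_injective two_ne_zero h).symm
  · rintro rfl
    exact ⟨Nat.lt_succ_of_le (Nat.le_self_pow two_ne_zero x), hn, rfl⟩

lemma sq_ne_two_mul_sq (n : ℕ) {x : ℕ} (hx : 0 < x) : n ^ 2 ≠ 2 * x ^ 2 := by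
  intro h
  apply irrational_sqrt_two
  refine ⟨(n / x : ℚ), ?_⟩
  have h' : (n : ℝ) ^ 2 = 2 * x ^ 2 := by exact_mod_cast h
  push_cast
  rw [eq_comm, Real.sqrt_eq_iff_mul_self_eq zero_le_two (by positivity)]
  field_simp
  linarith

lemma lerchC_sq (n : ℕ) : lerchC (n ^ 2) = ∅ :=
  Finset.eq_empty_of_forall_notMem fun x hx ↦ by
    simp only [lerchC, Finset.mem_filter] at hx
    exact sq_ne_two_mul_sq n hx.2.1 hx.2.2

lemma lerchh_sq_of_prime {p : ℕ} (hp : p.Prime) : lerchh (p ^ 2) = 1 := by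
  simp [lerchh, lerchA_sq_of_prime hp, lerchB_sq hp.pos, lerchC_sq]

lemma primeCounting_floor_sqrt_le_card_lerchh_eq_one (X : ℝ) :
    Nat.primeCounting ⌊√X⌋₊ ≤
      ((Finset.Icc 1 ⌊X⌋₊).filter (fun n ↦ lerchh n = 1)).card := by
  rw [← Nat.primesLE_card_eq_primeCounting]
  refine Finset.card_le_card_of_injOn (· ^ 2) (fun p hp ↦ ?_)
    (fun p _ q _ h ↦ Nat.pow_left_injective two_ne_zero h)
  obtain ⟨hp_le, hp⟩ := Nat.mem_primesLE.1 hp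
  have hp_sq : (p : ℝ) ^ 2 ≤ X :=
    (le_sqrt' (by exact_mod_cast hp.pos)).1 ((Nat.le_floor_iff (sqrt_nonneg X)).1 hp_le)
  simp only [Finset.coe_filter, Set.mem_ofPred_eq, Finset.mem_Icc]
  refine ⟨⟨?_, Nat.le_floor (by exact_mod_cast hp_sq)⟩, lerchh_sq_of_prime hp⟩
  exact hp.one_lt.le.trans (Nat.le_self_pow two_ne_zero p)

theorem eventually_mul_div_log_le_primeCounting {c : ℝ} (hc : c < log 2) :
    ∀ᶠ x : ℝ in atTop, c * x / log x ≤ Nat.primeCounting ⌊x⌋₊ := by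
  obtain ⟨ε, hε, rfl⟩ : ∃ ε, 0 < ε ∧ c = log 2 - 2 * ε :=
    ⟨(log 2 - c) / 2, by linarith, by ring⟩
  filter_upwards [isLittleO_log_id_atTop.bound hε, eventually_ge_atTop (max 2 (2 * log 2 / ε))]
    with x hlog hx
  have hx2 : 2 ≤ x := le_of_max_le_left hx
  refine le_trans (div_le_div_of_nonneg_right ?_ (log_nonneg (by linarith)))
    (Chebyshev.pi_ge' (by linarith))
  have hlog_x : log x ≤ ε * x := by
    simpa [abs_of_pos (by linarith : 0 < x)] using (le_abs_self _).trans hlog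
  have hlog_x2 : log (x + 2) ≤ log 2 + log x := by
    rw [← log_mul two_ne_zero (by linarith)]
    exact log_le_log (by linarith) (by linarith)
  have hlog_2 : 2 * log 2 ≤ ε * x := (div_le_iff₀' hε).1 (le_of_max_le_right hx)
  linarith

/-- There is `c > 0` so that for all sufficiently large `X`,
`#{1 ≤ n ≤ X : h(n) = 1} ≥ c·√X/log X`. -/
theorem card_h_eq_one_ge :
    ∃ c : ℝ, 0 < c ∧ ∃ X₀ : ℝ, ∀ X : ℝ, X₀ ≤ X →
      (((Finset.Icc 1 ⌊X⌋₊).filter (fun n => lerchh n = 1)).card : ℝ)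
        ≥ c * Real.sqrt X / Real.log X := by
  have hc : log 2 / 2 < log 2 := half_lt_self (log_pos one_lt_two)
  obtain ⟨X₀, hX₀⟩ := eventually_atTop.1
    (tendsto_sqrt_atTop.eventually (eventually_mul_div_log_le_primeCounting hc))
  refine ⟨log 2, log_pos one_lt_two, max X₀ 0, fun X hX ↦ ?_⟩
  calc log 2 * √X / log X = log 2 / 2 * √X / log √X := by
        rw [log_sqrt (le_of_max_le_right hX)]
        ring
    _ ≤ Nat.primeCounting ⌊√X⌋₊ := hX₀ X (le_of_max_le_left hX)
    _ ≤ _ := by exact_mod_cast primeCounting_floor_sqrt_le_card_lerchh_eq_one X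
end

section
/- There exists a constant c > 0 such that for all sufficiently large real X, the number of positive integers n ≤ X with h(n) = 2 is at least c·√X / log X. -/
/-!
For a prime `p`, divisibility by `p` shows that the only pair counted in `A_{p(p+1)}` is
`(p, 1)`, while `p(p+1)` lies strictly between `p²` and `(p+1)²` and is not twice a square, so
`h(p(p+1)) = 2`. Since `p ↦ p(p+1)` is injective, at least `π(√X - 1)` integers `n ≤ X` have
`h(n) = 2`, and Chebyshev's bound `π(x) ≫ x / log x` finishes the proof.
-/

open Finset Filter Real

theorem mem_lerchA {n x y : ℕ} : (x, y) ∈ lerchA n ↔ 0 < y ∧ y < x ∧ n = x * (x + y) := by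
  simp only [lerchA, mem_filter, mem_product, mem_range]
  constructor
  · rintro ⟨-, -, hy, hyx, rfl⟩
    exact ⟨hy, by omega, rfl⟩
  · rintro ⟨hy, hyx, rfl⟩
    exact ⟨⟨by nlinarith, by nlinarith⟩, by omega, hy, by omega, rfl⟩

theorem eq_and_eq_one_of_mul_add_eq_mul_succ {p x y : ℕ} (hp : p.Prime) (hy : 0 < y)
    (hyx : y < x) (h : x * (x + y) = p * (p + 1)) : x = p ∧ y = 1 := by
  rcases hp.dvd_mul.mp (Dvd.intro _ h.symm) with ⟨k, rfl⟩ | ⟨m, hm⟩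
  · have hk : k * (p * k + y) = p + 1 :=
      Nat.eq_of_mul_eq_mul_left hp.pos (by rw [← h]; ring)
    obtain rfl : k = 1 := by
      rcases Nat.lt_or_ge k 2 with hk2 | hk2
      · interval_cases k <;> simp_all
      · nlinarith [hp.two_le]
    omega
  · have hxm : x * m = p + 1 := Nat.eq_of_mul_eq_mul_left hp.pos (by rw [← h, hm]; ring)
    rcases Nat.lt_or_ge m 2 with hm2 | hm2
    · interval_cases m <;> omega
    · nlinarith [hp.two_le]

theorem lerchB_mul_succ (m : ℕ) : lerchB (m * (m + 1)) = ∅ := by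
  refine eq_empty_of_forall_notMem fun x hx => ?_
  obtain ⟨-, hx, h⟩ := mem_filter.mp hx
  rcases le_or_gt x m with hxm | hxm <;> nlinarith

theorem lerchC_prime_mul_succ {p : ℕ} (hp : p.Prime) : lerchC (p * (p + 1)) = ∅ := by
  refine eq_empty_of_forall_notMem fun x hx => ?_
  obtain ⟨-, hx, h⟩ := mem_filter.mp hx
  have hdvd : p ∣ 2 * x ^ 2 := h ▸ dvd_mul_right p (p + 1)
  rcases hp.dvd_mul.mp hdvd with h2 | hx2
  · obtain rfl := (Nat.prime_dvd_prime_iff_eq hp Nat.prime_two).mp h2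
    rcases Nat.lt_or_ge x 2 with hx2 | hx2
    · interval_cases x; omega
    · nlinarith
  · obtain ⟨k, rfl⟩ := hp.dvd_of_dvd_pow hx2
    have : 2 * p * k ^ 2 = p + 1 := Nat.eq_of_mul_eq_mul_left hp.pos (by rw [h]; ring)
    have hk : 0 < k := Nat.pos_of_mul_pos_left hx
    nlinarith [hp.two_le]

theorem lerchA_prime_mul_succ {p : ℕ} (hp : p.Prime) : lerchA (p * (p + 1)) = {(p, 1)} := by
  ext ⟨x, y⟩
  rw [mem_lerchA, mem_singleton, Prod.mk.injEq]
  constructor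
  · rintro ⟨hy, hyx, h⟩
    exact eq_and_eq_one_of_mul_add_eq_mul_succ hp hy hyx h.symm
  · rintro ⟨rfl, rfl⟩
    exact ⟨one_pos, hp.one_lt, rfl⟩

theorem lerchh_prime_mul_succ {p : ℕ} (hp : p.Prime) : lerchh (p * (p + 1)) = 2 := by
  rw [lerchh, lerchA_prime_mul_succ hp, lerchB_mul_succ, lerchC_prime_mul_succ hp]
  rfl

theorem primeCounting_le_card_lerchh_eq_two {m N : ℕ} (h : m * (m + 1) ≤ N) :
    m.primeCounting ≤ #{n ∈ Icc 1 N | lerchh n = 2} := by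
  rw [← Nat.primesLE_card_eq_primeCounting]
  refine card_le_card_of_injOn (fun p => p * (p + 1)) (fun p hp => ?_) ?_
  · obtain ⟨hpm, hp⟩ := Nat.mem_primesLE.mp hp
    have : p * (p + 1) ≤ m * (m + 1) := Nat.mul_le_mul hpm (by omega)
    simp only [coe_filter, Set.mem_ofPred_eq, mem_Icc]
    exact ⟨⟨Nat.mul_pos hp.pos (by omega), this.trans h⟩, lerchh_prime_mul_succ hp⟩
  · exact (StrictMono.injective fun a b hab => Nat.mul_lt_mul'' hab (by omega)).injOn

theorem eventually_div_log_le_primeCounting :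
    ∀ᶠ x : ℝ in atTop, x / (4 * log x) ≤ ⌊x⌋₊.primeCounting := by
  have hlog := (tendsto_atTop_add_const_right _ 2 tendsto_id).eventually
    (isLittleO_log_id_atTop.bound (by norm_num : (0 : ℝ) < 1 / 10))
  filter_upwards [hlog, eventually_ge_atTop 3] with x hlog hx
  refine le_trans ?_ (Chebyshev.pi_ge' (by linarith))
  rw [← div_div]
  refine div_le_div_of_nonneg_right ?_ (log_nonneg (by linarith))
  simp only [id] at hlog
  rw [norm_of_nonneg (log_nonneg (by linarith)), norm_of_nonneg (by linarith)] at hlog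
  nlinarith [log_two_gt_d9]

/-- There is `c > 0` so that for all sufficiently large `X`,
`#{1 ≤ n ≤ X : h(n) = 2} ≥ c·√X/log X`. -/
theorem card_h_eq_two_ge :
    ∃ c : ℝ, 0 < c ∧ ∃ X₀ : ℝ, ∀ X : ℝ, X₀ ≤ X →
      (((Finset.Icc 1 ⌊X⌋₊).filter (fun n => lerchh n = 2)).card : ℝ)
        ≥ c * Real.sqrt X / Real.log X := by
  refine ⟨1 / 8, by norm_num, eventually_atTop.mp ?_⟩
  have hsqrt : Tendsto (fun X => √X - 1) atTop atTop :=
    tendsto_atTop_add_const_right _ _ tendsto_sqrt_atTop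
  filter_upwards [hsqrt.eventually eventually_div_log_le_primeCounting, eventually_ge_atTop 16]
    with X hπ hX
  set t := √X with ht
  have ht4 : 4 ≤ t := le_sqrt_of_sq_le (by linarith)
  have hm : ⌊t - 1⌋₊ * (⌊t - 1⌋₊ + 1) ≤ ⌊X⌋₊ := by
    refine Nat.le_floor ?_
    have := Nat.floor_le (by linarith : 0 ≤ t - 1)
    push_cast
    nlinarith [mul_self_sqrt (by linarith : (0 : ℝ) ≤ X)]
  have hlogX : log X = 2 * log t := by rw [ht, log_sqrt (by linarith)]; ring
  have hlog_pos : 0 < log (t - 1) := log_pos (by linarith)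
  have hlog_le : log (t - 1) ≤ log t := log_le_log (by linarith) (by linarith)
  calc 1 / 8 * t / log X ≤ (t - 1) / (4 * log (t - 1)) := by
        rw [hlogX, div_le_div_iff₀ (by linarith) (by linarith)]
        nlinarith
    _ ≤ ⌊t - 1⌋₊.primeCounting := hπ
    _ ≤ _ := mod_cast primeCounting_le_card_lerchh_eq_two hm
end

section
/- The set of positive integers n for which h(n) is even has natural density 1; that is, (1/X)·#{1 ≤ n ≤ X : h(n) ≡ 0 (mod 2)} tends to 1 as X tends to infinity. -/
/-!
Since `h(n) ≡ |B_n| + |C_n| (mod 2)`, `h(n)` can only be odd when `n` is a square or twice a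
square. Among `1, …, N` there are at most `2√N` such numbers, so the even values have
density `1`.
-/

open Filter Finset Topology

theorem exists_eq_sq_or_eq_two_mul_sq_of_lerchh_odd {n : ℕ} (hn : lerchh n % 2 ≠ 0) :
    (∃ x, n = x ^ 2) ∨ ∃ x, n = 2 * x ^ 2 := by
  by_contra! h
  have hB : lerchB n = ∅ := filter_eq_empty_iff.2 fun x _ hx => h.1 x hx.2
  have hC : lerchC n = ∅ := filter_eq_empty_iff.2 fun x _ hx => h.2 x hx.2
  simp [lerchh, hB, hC] at hn

theorem mem_image_Icc_sqrt_of_eq_mul_sq {k n N x : ℕ} (hk : 0 < k) (hn : n ∈ Icc 1 N)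
    (hx : n = k * x ^ 2) : n ∈ (Icc 1 N.sqrt).image (fun x => k * x ^ 2) := by
  subst hx
  obtain ⟨hn1, hnN⟩ := mem_Icc.1 hn
  refine mem_image.2 ⟨x, mem_Icc.2 ⟨Nat.pos_of_ne_zero ?_, Nat.le_sqrt.2 (by nlinarith)⟩, rfl⟩
  rintro rfl
  simp at hn1

theorem le_card_filter_Icc_lerchh_even_add (N : ℕ) :
    N ≤ #{n ∈ Icc 1 N | lerchh n % 2 = 0} + 2 * N.sqrt := by
  have hodd : {n ∈ Icc 1 N | ¬lerchh n % 2 = 0} ⊆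
      (Icc 1 N.sqrt).image (fun x => 1 * x ^ 2) ∪ (Icc 1 N.sqrt).image (fun x => 2 * x ^ 2) := by
    intro n hn
    obtain ⟨hnN, hn⟩ := mem_filter.1 hn
    rcases exists_eq_sq_or_eq_two_mul_sq_of_lerchh_odd hn with ⟨x, hx⟩ | ⟨x, hx⟩
    · exact mem_union_left _ (mem_image_Icc_sqrt_of_eq_mul_sq one_pos hnN (by rw [hx, one_mul]))
    · exact mem_union_right _ (mem_image_Icc_sqrt_of_eq_mul_sq two_pos hnN hx)
  have hsplit := card_filter_add_card_filter_not (s := Icc 1 N) (fun n => lerchh n % 2 = 0)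
  have hodd_card := (card_le_card hodd).trans <| (card_union_le _ _).trans <|
    add_le_add card_image_le card_image_le
  simp only [Nat.card_Icc, Nat.add_sub_cancel] at hsplit hodd_card
  omega

theorem tendsto_card_filter_Icc_floor_div_of_le_add_sqrt (p : ℕ → Prop) [DecidablePred p]
    (C : ℝ) (hC : 0 ≤ C) (h : ∀ N : ℕ, (N : ℝ) ≤ #{n ∈ Icc 1 N | p n} + C * √N) :
    Tendsto (fun X : ℝ => (#{n ∈ Icc 1 ⌊X⌋₊ | p n} : ℝ) / X) atTop (𝓝 1) := by
  have hsqrt_div : Tendsto (fun X : ℝ => √X / X) atTop (𝓝 0) := by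
    refine (tendsto_inv_atTop_zero.comp Real.tendsto_sqrt_atTop).congr fun X => ?_
    simp [Real.sqrt_div_self']
  have hlower : Tendsto (fun X : ℝ => (⌊X⌋₊ : ℝ) / X - C * (√X / X)) atTop (𝓝 1) := by
    simpa using tendsto_nat_floor_div_atTop.sub (hsqrt_div.const_mul C)
  refine tendsto_of_tendsto_of_tendsto_of_le_of_le' hlower tendsto_nat_floor_div_atTop ?_ ?_
  all_goals filter_upwards [eventually_gt_atTop 0] with X hX
  · have hfloor := h ⌊X⌋₊
    have hsqrt : C * √(⌊X⌋₊ : ℝ) ≤ C * √X :=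
      mul_le_mul_of_nonneg_left (Real.sqrt_le_sqrt (Nat.floor_le hX.le)) hC
    rw [mul_div_assoc', div_sub_div_same, div_le_div_iff_of_pos_right hX]
    linarith
  · gcongr
    exact_mod_cast (card_filter_le _ _).trans (by simp)

open Filter in
/-- The set of `n` with `h(n)` even has natural density `1`:
`#{1 ≤ n ≤ X : h(n) ≡ 0 (mod 2)}/X → 1` as `X → ∞`. -/
theorem h_even_density_one :
    Tendsto
      (fun X : ℝ =>
        (((Finset.Icc 1 ⌊X⌋₊).filter (fun n => lerchh n % 2 = 0)).card : ℝ) / X)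
      atTop (nhds 1) := by
  refine tendsto_card_filter_Icc_floor_div_of_le_add_sqrt _ 2 zero_le_two fun N => ?_
  have hcount : (N : ℝ) ≤ #{n ∈ Icc 1 N | lerchh n % 2 = 0} + 2 * (N.sqrt : ℝ) := by
    exact_mod_cast le_card_filter_Icc_lerchh_even_add N
  linarith [Real.nat_sqrt_le_real_sqrt (a := N)]
end
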